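/- Let v₁, v₂ be maximal monotone maps on ℝ^d equal to the identity outside closure(Ω), and let v = (v₁ + v₂)/2 (the Minkowski average of the set-valued maps). Then for all x, y ∈ ℝ^d: ℓ_v(x,y)² ≥ (1/2)(ℓ_{v₁}(x,y)² + ℓ_{v₂}(x,y)²). Consequently, the map v ↦ c_v(a,b) is concave on the convex set of such maximal monotone maps. -/

import Mathlib

/-- A set-valued map on `ℝ^d` is monotone. -/
def MonotoneSetMap {d : ℕ} (v : EuclideanSpace ℝ (Fin d) → Set (EuclideanSpace ℝ (Fin d))) :
    Prop :=
  ∀ x₁ x₂ y₁ y₂, y₁ ∈ v x₁ → y₂ ∈ v x₂ → 0 ≤ (inner ℝ (y₁ - y₂) (x₁ - x₂) : ℝ)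

/-- Maximal monotone set-valued map with full domain. -/
def MaxMonotone {d : ℕ} (v : EuclideanSpace ℝ (Fin d) → Set (EuclideanSpace ℝ (Fin d))) :
    Prop :=
  MonotoneSetMap v ∧ (∀ x, (v x).Nonempty) ∧
    ∀ w : EuclideanSpace ℝ (Fin d) → Set (EuclideanSpace ℝ (Fin d)),
      MonotoneSetMap w → (∀ x, v x ⊆ w x) → w = v

/-- `ℓ_v(a,b) := inf { √(2⟨b' − a', b − a⟩) : a' ∈ v(a), b' ∈ v(b) }`. -/
noncomputable def ellV {d : ℕ} (v : EuclideanSpace ℝ (Fin d) → Set (EuclideanSpace ℝ (Fin d)))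
    (a b : EuclideanSpace ℝ (Fin d)) : ℝ :=
  sInf {r : ℝ | ∃ a' ∈ v a, ∃ b' ∈ v b, r = Real.sqrt (2 * (inner ℝ (b' - a') (b - a) : ℝ))}

/-- `c_v(a,b)`: infimum over finite chains joining `a` to `b` of the sums of `ℓ_v`. -/
noncomputable def costV {d : ℕ} (v : EuclideanSpace ℝ (Fin d) → Set (EuclideanSpace ℝ (Fin d)))
    (a b : EuclideanSpace ℝ (Fin d)) : ℝ :=
  sInf {r : ℝ | ∃ (N : ℕ) (x : ℕ → EuclideanSpace ℝ (Fin d)), 0 < N ∧ x 0 = a ∧ x N = b ∧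
    r = ∑ i ∈ Finset.range N, ellV v (x i) (x (i+1))}

/-! Averaging the two selections turns the pairing `2⟨b' - a', b - a⟩` into the weighted average of
the pairings for `v₁` and `v₂`. Monotonicity makes these pairings nonnegative, so they dominate the
squares `ℓ_{vᵢ}²`; taking the infimum gives the inequality for `ℓ_v²`. Concavity of the square root
turns it into `ℓ_v ≥ (ℓ_{v₁} + ℓ_{v₂}) / 2`, which passes through sums along chains and infima over
chains to `c_v`. -/

open scoped RealInnerProductSpace Pointwise

section

variable {d : ℕ} {v v₁ v₂ : EuclideanSpace ℝ (Fin d) → Set (EuclideanSpace ℝ (Fin d))}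
  {a b a' b' : EuclideanSpace ℝ (Fin d)}

lemma ellV_nonneg (v : EuclideanSpace ℝ (Fin d) → Set (EuclideanSpace ℝ (Fin d)))
    (a b : EuclideanSpace ℝ (Fin d)) : 0 ≤ ellV v a b :=
  Real.sInf_nonneg (by rintro r ⟨a', -, b', -, rfl⟩; exact Real.sqrt_nonneg _)

lemma ellV_le_sqrt (ha : a' ∈ v a) (hb : b' ∈ v b) :
    ellV v a b ≤ √(2 * ⟪b' - a', b - a⟫) :=
  csInf_le ⟨0, by rintro r ⟨a', -, b', -, rfl⟩; exact Real.sqrt_nonneg _⟩ ⟨a', ha, b', hb, rfl⟩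

lemma MonotoneSetMap.sq_ellV_le (hv : MonotoneSetMap v) (ha : a' ∈ v a) (hb : b' ∈ v b) :
    ellV v a b ^ 2 ≤ 2 * ⟪b' - a', b - a⟫ := by
  have hpos : 0 ≤ ⟪b' - a', b - a⟫ := hv b a b' a' hb ha
  calc ellV v a b ^ 2 ≤ √(2 * ⟪b' - a', b - a⟫) ^ 2 :=
        pow_le_pow_left₀ (ellV_nonneg v a b) (ellV_le_sqrt ha hb) 2
    _ = 2 * ⟪b' - a', b - a⟫ := Real.sq_sqrt (by linarith)

lemma le_sq_ellV {c : ℝ} (ha : (v a).Nonempty) (hb : (v b).Nonempty)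
    (h : ∀ a' ∈ v a, ∀ b' ∈ v b, c ≤ 2 * ⟪b' - a', b - a⟫) : c ≤ ellV v a b ^ 2 := by
  obtain ⟨a₀, ha₀⟩ := ha
  obtain ⟨b₀, hb₀⟩ := hb
  have hsqrt : √c ≤ ellV v a b := le_csInf ⟨_, a₀, ha₀, b₀, hb₀, rfl⟩ <| by
    rintro r ⟨a', ha', b', hb', rfl⟩
    exact Real.sqrt_le_sqrt (h a' ha' b' hb')
  exact (Real.sqrt_le_iff.mp hsqrt).2

lemma weighted_sq_ellV_le {s t : ℝ} (hs : 0 ≤ s) (ht : 0 ≤ t)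
    (hm₁ : MonotoneSetMap v₁) (hm₂ : MonotoneSetMap v₂)
    (hne₁ : ∀ x, (v₁ x).Nonempty) (hne₂ : ∀ x, (v₂ x).Nonempty) :
    s * ellV v₁ a b ^ 2 + t * ellV v₂ a b ^ 2 ≤ ellV (fun x => s • v₁ x + t • v₂ x) a b ^ 2 := by
  have hne : ∀ x, (s • v₁ x + t • v₂ x).Nonempty := fun x =>
    ((hne₁ x).smul_set).add (hne₂ x).smul_set
  refine le_sq_ellV (hne a) (hne b) ?_
  rintro _ ⟨_, ⟨p, hp, rfl⟩, _, ⟨q, hq, rfl⟩, rfl⟩ _ ⟨_, ⟨p', hp', rfl⟩, _, ⟨q', hq', rfl⟩, rfl⟩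
  have hpair : ⟪(s • p' + t • q') - (s • p + t • q), b - a⟫
      = s * ⟪p' - p, b - a⟫ + t * ⟪q' - q, b - a⟫ := by
    rw [show (s • p' + t • q') - (s • p + t • q) = s • (p' - p) + t • (q' - q) by module,
      inner_add_left, real_inner_smul_left, real_inner_smul_left]
  have h₁ := hm₁.sq_ellV_le hp hp'
  have h₂ := hm₂.sq_ellV_le hq hq'
  rw [hpair]
  nlinarith

lemma weighted_ellV_le_of_sq {ℓ ℓ₁ ℓ₂ s t : ℝ} (hs : 0 ≤ s) (ht : 0 ≤ t) (hst : s + t = 1)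
    (hℓ : 0 ≤ ℓ) (h : s * ℓ₁ ^ 2 + t * ℓ₂ ^ 2 ≤ ℓ ^ 2) : s * ℓ₁ + t * ℓ₂ ≤ ℓ := by
  refine le_of_pow_le_pow_left₀ two_ne_zero hℓ ?_
  have hjensen : (s * ℓ₁ + t * ℓ₂) ^ 2 = s * ℓ₁ ^ 2 + t * ℓ₂ ^ 2 - s * t * (ℓ₁ - ℓ₂) ^ 2 := by
    rw [← mul_one (s * ℓ₁ ^ 2), ← mul_one (t * ℓ₂ ^ 2), ← hst]
    ring
  nlinarith [mul_nonneg (mul_nonneg hs ht) (sq_nonneg (ℓ₁ - ℓ₂))]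

lemma costV_le_sum {N : ℕ} {x : ℕ → EuclideanSpace ℝ (Fin d)} (hN : 0 < N) (hx₀ : x 0 = a)
    (hxN : x N = b) : costV v a b ≤ ∑ i ∈ Finset.range N, ellV v (x i) (x (i + 1)) :=
  csInf_le ⟨0, by
      rintro r ⟨N, x, -, -, -, rfl⟩
      exact Finset.sum_nonneg fun i _ => ellV_nonneg v _ _⟩
    ⟨N, x, hN, hx₀, hxN, rfl⟩

lemma weighted_costV_le {u : EuclideanSpace ℝ (Fin d) → Set (EuclideanSpace ℝ (Fin d))}
    {s t : ℝ} (hs : 0 ≤ s) (ht : 0 ≤ t)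
    (h : ∀ x y, s * ellV v₁ x y + t * ellV v₂ x y ≤ ellV u x y) (a b : EuclideanSpace ℝ (Fin d)) :
    s * costV v₁ a b + t * costV v₂ a b ≤ costV u a b := by
  refine le_csInf ⟨ellV u a b, 1, fun i => if i = 0 then a else b, one_pos, rfl, rfl, by simp⟩ ?_
  rintro _ ⟨N, x, hN, hx₀, hxN, rfl⟩
  calc s * costV v₁ a b + t * costV v₂ a b
      ≤ s * ∑ i ∈ Finset.range N, ellV v₁ (x i) (x (i + 1))
        + t * ∑ i ∈ Finset.range N, ellV v₂ (x i) (x (i + 1)) := by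
        gcongr <;> exact costV_le_sum hN hx₀ hxN
    _ = ∑ i ∈ Finset.range N, (s * ellV v₁ (x i) (x (i + 1)) + t * ellV v₂ (x i) (x (i + 1))) := by
        rw [Finset.sum_add_distrib, Finset.mul_sum, Finset.mul_sum]
    _ ≤ ∑ i ∈ Finset.range N, ellV u (x i) (x (i + 1)) :=
        Finset.sum_le_sum fun i _ => h _ _

end

theorem stmt15_general {d : ℕ}
    (v₁ v₂ : EuclideanSpace ℝ (Fin d) → Set (EuclideanSpace ℝ (Fin d)))
    (hv₁ : MaxMonotone v₁) (hv₂ : MaxMonotone v₂)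
    (v : EuclideanSpace ℝ (Fin d) → Set (EuclideanSpace ℝ (Fin d)))
    (hv : v = fun x => {z | ∃ p ∈ v₁ x, ∃ q ∈ v₂ x, z = (1/2 : ℝ) • (p + q)}) :
    (∀ x y : EuclideanSpace ℝ (Fin d),
      (1/2) * ((ellV v₁ x y)^2 + (ellV v₂ x y)^2) ≤ (ellV v x y)^2) ∧
    (∀ a b : EuclideanSpace ℝ (Fin d),
      (1/2) * (costV v₁ a b + costV v₂ a b) ≤ costV v a b) := by
  have hv_avg : v = fun x => (1/2 : ℝ) • v₁ x + (1/2 : ℝ) • v₂ x := by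
    ext x z
    simp only [hv, Set.mem_ofPred_eq, Set.mem_add, Set.mem_smul_set, smul_add]
    grind
  obtain ⟨hm₁, hne₁, -⟩ := hv₁
  obtain ⟨hm₂, hne₂, -⟩ := hv₂
  have hsq : ∀ x y, (1/2) * ellV v₁ x y ^ 2 + (1/2) * ellV v₂ x y ^ 2 ≤ ellV v x y ^ 2 :=
    fun x y => hv_avg ▸ weighted_sq_ellV_le (by norm_num) (by norm_num) hm₁ hm₂ hne₁ hne₂
  refine ⟨fun x y => by linarith [hsq x y], fun a b => ?_⟩
  have hcost := weighted_costV_le (by norm_num) (by norm_num) (fun x y =>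
    weighted_ellV_le_of_sq (by norm_num) (by norm_num) (by norm_num) (ellV_nonneg v x y) (hsq x y)) a b
  linarith

theorem stmt15 {d : ℕ} (Ω : Set (EuclideanSpace ℝ (Fin d)))
    (hΩo : IsOpen Ω) (hΩb : Bornology.IsBounded Ω) (hΩc : Convex ℝ Ω) (hΩne : Ω.Nonempty)
    (v₁ v₂ : EuclideanSpace ℝ (Fin d) → Set (EuclideanSpace ℝ (Fin d)))
    (hv₁ : MaxMonotone v₁) (hv₂ : MaxMonotone v₂)
    (hid₁ : ∀ x ∉ closure Ω, v₁ x = {x}) (hid₂ : ∀ x ∉ closure Ω, v₂ x = {x})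
    (v : EuclideanSpace ℝ (Fin d) → Set (EuclideanSpace ℝ (Fin d)))
    (hv : v = fun x => {z | ∃ p ∈ v₁ x, ∃ q ∈ v₂ x, z = (1/2 : ℝ) • (p + q)}) :
    (∀ x y : EuclideanSpace ℝ (Fin d),
      (1/2) * ((ellV v₁ x y)^2 + (ellV v₂ x y)^2) ≤ (ellV v x y)^2) ∧
    (∀ a b : EuclideanSpace ℝ (Fin d),
      (1/2) * (costV v₁ a b + costV v₂ a b) ≤ costV v a b) :=
  stmt15_general v₁ v₂ hv₁ hv₂ v hv
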